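/- Let m > n ≥ 1 be integers. Let G be the group of pairs w = (σ,η) with σ ∈ S_m, η ∈ {±1}^m and ∏_i η_i = 1, acting linearly on ℝ^{m+n} (with standard basis ε_1,…,ε_m,δ_1,…,δ_n) by w(ε_i) = η_i ε_{σ(i)} and w(δ_j) = δ_j. Define ρ := Σ_{i=1}^{n} (m−n−1)ε_i + Σ_{i=n+1}^{m−1} (m−1−i)ε_i (so the coefficient of ε_m is 0), and define Δ_{+,1} := {ε_a+δ_b : 1≤a≤m, 1≤b≤n} ∪ {ε_a−δ_b : 1≤b≤n−1, a≤b} ∪ {ε_a−δ_n : 1≤a≤m−1} ∪ {δ_b−ε_a : 1≤b≤n−1, a>b} ∪ {δ_n−ε_m}. Let A := {w ∈ G : wρ = ρ, w(ε_i)−δ_i ∈ Δ_{+,1} for all 1≤i≤n−1, and w(ε_m)+δ_n ∈ Δ_{+,1}}. Then A consists of exactly three elements: the identity; the element with σ the transposition of m−1 and m and η ≡ 1; and the element with σ the identity and η_{m−1} = η_m = −1, η_i = 1 otherwise. Consequently Σ_{w∈A} sgn(σ(w)) = 1. -/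

import Mathlib

open scoped Classical

/-- The action of a signed permutation `(σ,η)` of the `ε`-coordinates on
`ℝ^{m+n} = span(ε_1,…,ε_m,δ_1,…,δ_n)`: `ε_i ↦ η_i ε_{σ(i)}`, `δ_j ↦ δ_j`. -/
noncomputable def dAct (m n : ℕ) (σ : Equiv.Perm (Fin m)) (η : Fin m → ℤˣ)
    (f : Fin m ⊕ Fin n → ℝ) : Fin m ⊕ Fin n → ℝ :=
  Sum.elim (fun j => ((η (σ.symm j) : ℤ) : ℝ) * f (Sum.inl (σ.symm j)))
    (fun b => f (Sum.inr b))

/-- `ρ = Σ_{i=1}^{n} (m−n−1)ε_i + Σ_{i=n+1}^{m−1} (m−1−i)ε_i` (with the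
coefficient of `ε_m` equal to `0`); `1`-indexed, coordinates `0`-indexed. -/
noncomputable def dRho (m n : ℕ) : Fin m ⊕ Fin n → ℝ :=
  Sum.elim (fun i => if (i : ℕ) < n then (m : ℝ) - n - 1
      else if (i : ℕ) + 1 < m then (m : ℝ) - 2 - (i : ℕ) else 0)
    (fun _ => 0)

/-- The set of positive odd roots
`Δ₊₁ = {ε_a+δ_b} ∪ {ε_a−δ_b : b≤n−1, a≤b} ∪ {ε_a−δ_n : a≤m−1}
 ∪ {δ_b−ε_a : b≤n−1, a>b} ∪ {δ_n−ε_m}` (`1`-indexed; coordinates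
`0`-indexed). -/
noncomputable def dOddPos (m n : ℕ) : Set (Fin m ⊕ Fin n → ℝ) :=
  {v | (∃ (a : Fin m) (b : Fin n),
          v = Pi.single (Sum.inl a) 1 + Pi.single (Sum.inr b) 1) ∨
       (∃ (a : Fin m) (b : Fin n), (b : ℕ) + 1 < n ∧ (a : ℕ) ≤ (b : ℕ) ∧
          v = Pi.single (Sum.inl a) 1 - Pi.single (Sum.inr b) 1) ∨
       (∃ a : Fin m, (a : ℕ) + 1 < m ∧ ∃ hb : n - 1 < n,
          v = Pi.single (Sum.inl a) 1 - Pi.single (Sum.inr ⟨n - 1, hb⟩) 1) ∨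
       (∃ (a : Fin m) (b : Fin n), (b : ℕ) + 1 < n ∧ (b : ℕ) < (a : ℕ) ∧
          v = Pi.single (Sum.inr b) 1 - Pi.single (Sum.inl a) 1) ∨
       (∃ (hm : m - 1 < m) (hb : n - 1 < n),
          v = Pi.single (Sum.inr ⟨n - 1, hb⟩) 1 -
              Pi.single (Sum.inl ⟨m - 1, hm⟩) 1)}

/-!
Write `w = (σ, η)`, so that `wρ = ρ` says `η_i ρ_i = ρ_{σ(i)}`. The coefficients of `ρ` are
nonnegative, equal on `ε_1, …, ε_n`, and positive and strictly decreasing on `ε_n, …, ε_{m−2}`;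
hence `η_i = 1` and `σ(i) ≤ i` for `n ≤ i ≤ m − 2`, while for `i ≤ n − 1` the same follows from
`η_i ε_{σ(i)} − δ_i ∈ Δ_{+,1}`. A permutation with `σ(i) ≤ i` on an initial segment fixes it, so
`w` only moves `ε_{m−1}, ε_m`; then `∏ η = 1` forces `η_{m−1} = η_m`, and
`η_m ε_{σ(m)} + δ_n ∈ Δ_{+,1}` forces `η_m = 1` unless `σ(m) = m`. What is left is the identity, the
transposition and the double sign change, with signs `1 − 1 + 1 = 1`.
-/

open Equiv

theorem Equiv.Perm.apply_eq_self_of_forall_lt_apply_le {α : Type*} [LinearOrder α]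
    [WellFoundedLT α] (σ : Perm α) {k : α} (h : ∀ i < k, σ i ≤ i) : ∀ i < k, σ i = i := by
  intro i
  induction i using WellFoundedLT.induction with
  | _ i ih =>
    intro hik
    refine (h i hik).antisymm (not_lt.1 fun hlt => hlt.ne ?_)
    exact σ.injective (ih _ hlt (hlt.trans hik))

theorem Equiv.Perm.eq_one_or_eq_swap_of_forall_ne {α : Type*} [DecidableEq α] {σ : Perm α}
    {a b : α} (hab : a ≠ b) (h : ∀ x, x ≠ a → x ≠ b → σ x = x) :
    σ = 1 ∨ σ = swap a b := by
  have hpair : ∀ x, σ x ≠ a → σ x ≠ b → σ x = x := fun x ha hb => σ.injective (h _ ha hb)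
  by_cases ha : σ a = a
  · have hb' : σ b ≠ a := fun hba => hab (σ.injective (ha.trans hba.symm))
    have hb : σ b = b := by_contra fun hb => hb (hpair b hb' hb)
    refine .inl (Equiv.ext fun x => ?_)
    by_cases hxa : x = a
    · rw [hxa, ha]; rfl
    by_cases hxb : x = b
    · rw [hxb, hb]; rfl
    exact h x hxa hxb
  · have ha' : σ a = b := by_contra fun ha' => ha (hpair a ha ha')
    have hb' : σ b ≠ b := fun hbb => hab (σ.injective (ha'.trans hbb.symm))
    have hb : σ b = a := by_contra fun hba => hb' (hpair b hba hb')
    refine .inr (Equiv.ext fun x => ?_)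
    by_cases hxa : x = a
    · rw [hxa, ha', swap_apply_left]
    by_cases hxb : x = b
    · rw [hxb, hb, swap_apply_right]
    rw [h x hxa hxb, swap_apply_of_ne_of_ne hxa hxb]

theorem signedPerm_trivial_off_pair_iff {α : Type*} [Fintype α] [DecidableEq α] {a b : α}
    (hab : a ≠ b) {σ : Perm α} {η : α → ℤˣ} :
    ((∀ x, x ≠ a → x ≠ b → σ x = x ∧ η x = 1) ∧ ∏ x, η x = 1 ∧
        (η b = 1 ∨ η b = -1 ∧ σ b = b)) ↔
      (σ, η) = (1, fun _ => 1) ∨ (σ, η) = (swap a b, fun _ => 1) ∨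
        (σ, η) = (1, fun x => if x = a ∨ x = b then -1 else 1) := by
  constructor
  · rintro ⟨hout, hprod, hlast⟩
    have hηa : η a = η b := by
      rw [Fintype.prod_eq_mul a b hab fun x hx => (hout x hx.1 hx.2).2, mul_eq_one_iff_eq_inv,
        Int.units_inv_eq_self] at hprod
      exact hprod
    have hη : η = fun x => if x = a ∨ x = b then η b else 1 := by
      funext x
      split_ifs with hx
      · rcases hx with rfl | rfl
        exacts [hηa, rfl]
      · exact (hout x (fun h => hx (.inl h)) fun h => hx (.inr h)).2
    rcases hlast with hb | ⟨hb, hσb⟩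
    · rw [hb] at hη
      simp only [ite_self] at hη
      subst hη
      rcases σ.eq_one_or_eq_swap_of_forall_ne hab fun x hxa hxb => (hout x hxa hxb).1 with rfl | rfl
      · exact .inl rfl
      · exact .inr (.inl rfl)
    · rw [hb] at hη
      subst hη
      refine .inr (.inr ?_)
      rcases σ.eq_one_or_eq_swap_of_forall_ne hab fun x hxa hxb => (hout x hxa hxb).1 with rfl | rfl
      · rfl
      · exact absurd hσb (by simpa using hab)
  · rintro (h | h | h) <;> obtain ⟨rfl, rfl⟩ := Prod.mk.inj h
    · simp
    · refine ⟨fun x hxa hxb => ⟨swap_apply_of_ne_of_ne hxa hxb, rfl⟩, by simp, .inl rfl⟩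
    · refine ⟨fun x hxa hxb => ⟨rfl, by simp [hxa, hxb]⟩, ?_, .inr ⟨by simp, rfl⟩⟩
      rw [Fintype.prod_eq_mul a b hab fun x hx => by simp [hx.1, hx.2]]
      simp

theorem sum_sign_signedPerm_triple {α : Type*} [Fintype α] [DecidableEq α] {a b : α}
    (hab : a ≠ b) :
    ∑ w ∈ ({(1, fun _ => 1), (swap a b, fun _ => 1),
        (1, fun x => if x = a ∨ x = b then -1 else 1)} : Finset (Perm α × (α → ℤˣ))),
      (Perm.sign w.1 : ℤ) = 1 := by
  have hswap : swap a b ≠ 1 := mt swap_eq_one_iff.1 hab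
  have hflip : (fun x => if x = a ∨ x = b then -1 else 1 : α → ℤˣ) ≠ fun _ => 1 :=
    fun h => by simpa using congrFun h b
  rw [Finset.sum_insert (by simp [hswap.symm, hflip.symm]), Finset.sum_insert (by simp [hswap]),
    Finset.sum_singleton]
  simp [Perm.sign_swap hab]

theorem dAct_eq_self_iff {m n : ℕ} {σ : Perm (Fin m)} {η : Fin m → ℤˣ}
    {f : Fin m ⊕ Fin n → ℝ} :
    dAct m n σ η f = f ↔ ∀ i, ((η i : ℤ) : ℝ) * f (Sum.inl i) = f (Sum.inl (σ i)) := by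
  constructor
  · intro h i
    simpa [dAct] using congrFun h (Sum.inl (σ i))
  · intro h
    funext x
    rcases x with j | j
    · simpa [dAct] using h (σ.symm j)
    · rfl

section dRho

variable {m n : ℕ}

theorem dRho_inl_of_add_one_lt {i : Fin m} (hi : (i : ℕ) + 1 < m) :
    dRho m n (Sum.inl i) = m - 2 - (max (i : ℕ) (n - 1) : ℕ) := by
  simp only [dRho, Sum.elim_inl, if_pos hi]
  split_ifs with h
  · rw [max_eq_right (by omega), Nat.cast_sub (by omega)]
    push_cast
    ring
  · rw [max_eq_left (by omega)]

theorem dRho_inl_eq_zero (hmn : n < m) {i : Fin m} (hi : m ≤ (i : ℕ) + 2) :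
    dRho m n (Sum.inl i) = 0 := by
  by_cases h : (i : ℕ) + 1 < m
  · have hi' : ((i : ℕ) : ℝ) + 2 = m := by exact_mod_cast (by omega : (i : ℕ) + 2 = m)
    rw [dRho_inl_of_add_one_lt h, max_eq_left (by omega)]
    linarith
  · simp [dRho, h, show ¬(i : ℕ) < n by omega]

theorem dRho_nonneg (hmn : n < m) (x : Fin m ⊕ Fin n) : 0 ≤ dRho m n x := by
  rcases x with i | b
  · by_cases h : (i : ℕ) + 1 < m
    · have hmax : ((max (i : ℕ) (n - 1) : ℕ) : ℝ) + 2 ≤ m := by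
        exact_mod_cast (by omega : max (i : ℕ) (n - 1) + 2 ≤ m)
      rw [dRho_inl_of_add_one_lt h]
      linarith
    · rw [dRho_inl_eq_zero hmn (by omega)]
  · exact le_rfl

theorem eq_one_and_le_of_mul_dRho_eq (hmn : n < m) {i j : Fin m} {c : ℤˣ}
    (hi : n ≤ (i : ℕ) + 1) (hi' : (i : ℕ) + 2 < m)
    (h : ((c : ℤ) : ℝ) * dRho m n (Sum.inl i) = dRho m n (Sum.inl j)) : c = 1 ∧ j ≤ i := by
  have hρi : dRho m n (Sum.inl i) = m - 2 - (i : ℕ) := by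
    rw [dRho_inl_of_add_one_lt (by omega), max_eq_left (by omega)]
  have hpos : 0 < dRho m n (Sum.inl i) := by
    have : ((i : ℕ) : ℝ) + 2 < m := by exact_mod_cast hi'
    linarith
  have hc : c = 1 := by
    refine (Int.units_eq_one_or c).resolve_right fun hc => ?_
    have := dRho_nonneg hmn (Sum.inl j)
    rw [← h, hc, Units.val_neg, Units.val_one, Int.cast_neg, Int.cast_one, neg_one_mul] at this
    linarith
  subst hc
  rw [Units.val_one, Int.cast_one, one_mul] at h
  have hj : (j : ℕ) + 1 < m := by
    by_contra hj
    rw [dRho_inl_eq_zero hmn (i := j) (by omega)] at h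
    linarith
  rw [hρi, dRho_inl_of_add_one_lt hj] at h
  have hmax : max (j : ℕ) (n - 1) = i := by
    exact_mod_cast (by linarith : ((max (j : ℕ) (n - 1) : ℕ) : ℝ) = (i : ℕ))
  exact ⟨rfl, Fin.le_def.2 (hmax ▸ le_max_left _ _)⟩

end dRho

theorem eq_one_and_le_of_smul_single_sub_single_mem_dOddPos {m n : ℕ} {p : Fin m} {c : ℤˣ}
    {q : Fin n} (hq : (q : ℕ) + 1 < n)
    (h : ((c : ℤ) : ℝ) • (Pi.single (Sum.inl p) 1 : Fin m ⊕ Fin n → ℝ) -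
      Pi.single (Sum.inr q) 1 ∈ dOddPos m n) :
    c = 1 ∧ (p : ℕ) ≤ q := by
  rcases h with ⟨a, b, hv⟩ | ⟨a, b, -, hab, hv⟩ | ⟨a, -, hb, hv⟩ | ⟨a, b, -, -, hv⟩ | ⟨_, hb, hv⟩
  · have hq' := congrFun hv (Sum.inr q)
    by_cases hqb : q = b <;>
      norm_num [Pi.single_apply, Sum.inl_ne_inr, Sum.inr_ne_inl, hqb] at hq'
  · obtain rfl : q = b := by_contra fun hqb => by
      simpa [Pi.single_apply, hqb] using congrFun hv (Sum.inr q)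
    obtain rfl : p = a := by_contra fun hpa => by
      rcases Int.units_eq_one_or c with rfl | rfl <;>
        simpa [Pi.single_apply, hpa] using congrFun hv (Sum.inl p)
    rcases Int.units_eq_one_or c with rfl | rfl
    · exact ⟨rfl, hab⟩
    · have hp := congrFun hv (Sum.inl p)
      norm_num at hp
  · have hq' := congrFun hv (Sum.inr q)
    have hqn : q ≠ ⟨n - 1, hb⟩ := by simp only [ne_eq, Fin.ext_iff]; omega
    norm_num [Pi.single_apply, Sum.inl_ne_inr, Sum.inr_ne_inl, hqn] at hq'
  · have hq' := congrFun hv (Sum.inr q)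
    by_cases hqb : q = b <;>
      norm_num [Pi.single_apply, Sum.inl_ne_inr, Sum.inr_ne_inl, hqb] at hq'
  · have hq' := congrFun hv (Sum.inr q)
    by_cases hqb : q = ⟨n - 1, hb⟩ <;>
      norm_num [Pi.single_apply, Sum.inl_ne_inr, Sum.inr_ne_inl, hqb] at hq'

theorem eq_one_or_of_smul_single_add_single_mem_dOddPos {m n : ℕ} {p : Fin m} {c : ℤˣ}
    (hn : n - 1 < n)
    (h : ((c : ℤ) : ℝ) • (Pi.single (Sum.inl p) 1 : Fin m ⊕ Fin n → ℝ) +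
      Pi.single (Sum.inr ⟨n - 1, hn⟩) 1 ∈ dOddPos m n) :
    c = 1 ∨ c = -1 ∧ (p : ℕ) = m - 1 := by
  rcases Int.units_eq_one_or c with rfl | rfl
  · exact .inl rfl
  refine .inr ⟨rfl, ?_⟩
  rcases h with ⟨a, b, hv⟩ | ⟨a, b, hb, -, hv⟩ | ⟨a, -, _, hv⟩ | ⟨a, b, hb, -, hv⟩ | ⟨hm, _, hv⟩
  · have hp := congrFun hv (Sum.inl p)
    by_cases hpa : p = a <;>
      norm_num [Pi.single_apply, Sum.inl_ne_inr, Sum.inr_ne_inl, hpa] at hp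
  · have hb' := congrFun hv (Sum.inr b)
    by_cases hbn : (⟨n - 1, hn⟩ : Fin n) = b <;>
      norm_num [Pi.single_apply, Sum.inl_ne_inr, Sum.inr_ne_inl, hbn] at hb'
  · have hn' := congrFun hv (Sum.inr ⟨n - 1, hn⟩)
    norm_num [Pi.single_apply, Sum.inr_ne_inl] at hn'
  · have hn' := congrFun hv (Sum.inr ⟨n - 1, hn⟩)
    have hbn : (⟨n - 1, hn⟩ : Fin n) ≠ b := by simp only [ne_eq, Fin.ext_iff]; omega
    norm_num [Pi.single_apply, Sum.inl_ne_inr, Sum.inr_ne_inl, hbn] at hn'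
  · by_contra hpm
    have hp := congrFun hv (Sum.inl p)
    norm_num [Pi.single_apply, Sum.inl_ne_inr, Sum.inr_ne_inl, Fin.ext_iff, hpm] at hp

def dAdmissible (m n : ℕ) (hn : 1 ≤ n) (hmn : n < m) :
    Set (Perm (Fin m) × (Fin m → ℤˣ)) :=
  {w | (∏ i, w.2 i = 1) ∧
      dAct m n w.1 w.2 (dRho m n) = dRho m n ∧
      (∀ i : Fin n, (i : ℕ) + 1 < n →
        (((w.2 (Fin.castLE hmn.le i) : ℤ) : ℝ) •
            (Pi.single (Sum.inl (w.1 (Fin.castLE hmn.le i))) 1 :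
              Fin m ⊕ Fin n → ℝ) -
          Pi.single (Sum.inr i) 1) ∈ dOddPos m n) ∧
      (((w.2 ⟨m - 1, Nat.sub_one_lt_of_lt hmn⟩ : ℤ) : ℝ) •
          (Pi.single (Sum.inl (w.1 ⟨m - 1, Nat.sub_one_lt_of_lt hmn⟩)) 1 :
            Fin m ⊕ Fin n → ℝ) +
        Pi.single (Sum.inr ⟨n - 1, Nat.sub_one_lt_of_le hn le_rfl⟩) 1) ∈ dOddPos m n}

theorem apply_eq_self_and_eq_one_of_dAct_dRho {m n : ℕ} (hmn : n < m) {σ : Perm (Fin m)}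
    {η : Fin m → ℤˣ} (hρ : dAct m n σ η (dRho m n) = dRho m n)
    (hS : ∀ i : Fin m, (i : ℕ) + 1 < n → η i = 1 ∧ σ i ≤ i) (i : Fin m) (hi : (i : ℕ) + 2 < m) :
    σ i = i ∧ η i = 1 := by
  have hle : ∀ j : Fin m, (j : ℕ) + 2 < m → η j = 1 ∧ σ j ≤ j := fun j hj =>
    if hjn : (j : ℕ) + 1 < n then hS j hjn
    else eq_one_and_le_of_mul_dRho_eq hmn (by omega) hj (dAct_eq_self_iff.1 hρ j)
  have hlt : ∀ j : Fin m, (j : ℕ) + 2 < m ↔ j < ⟨m - 2, Nat.sub_lt_self two_pos (by omega)⟩ :=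
    fun j => by simp only [Fin.lt_def]; omega
  refine ⟨σ.apply_eq_self_of_forall_lt_apply_le (fun j hj => ?_) i ((hlt i).1 hi), (hle i hi).1⟩
  exact (hle j ((hlt j).2 hj)).2

theorem dAct_dRho_eq_self {m n : ℕ} (hmn : n < m) {σ : Perm (Fin m)} {η : Fin m → ℤˣ}
    (hlow : ∀ i : Fin m, (i : ℕ) + 2 < m → σ i = i ∧ η i = 1) :
    dAct m n σ η (dRho m n) = dRho m n := by
  have hhigh : ∀ i : Fin m, m ≤ (i : ℕ) + 2 → m ≤ (σ i : ℕ) + 2 := fun i hi => by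
    by_contra h
    have := congrArg Fin.val (σ.injective (hlow (σ i) (by omega)).1)
    omega
  refine dAct_eq_self_iff.2 fun i => ?_
  by_cases hi : (i : ℕ) + 2 < m
  · simp [(hlow i hi).1, (hlow i hi).2]
  · rw [dRho_inl_eq_zero hmn (by omega), dRho_inl_eq_zero hmn (hhigh i (by omega)), mul_zero]

theorem mem_dAdmissible_iff {m n : ℕ} (hn : 1 ≤ n) (hmn : n < m) {a b : Fin m}
    (ha : (a : ℕ) = m - 2) (hb : (b : ℕ) = m - 1) {σ : Perm (Fin m)} {η : Fin m → ℤˣ} :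
    (σ, η) ∈ dAdmissible m n hn hmn ↔
      (∀ x, x ≠ a → x ≠ b → σ x = x ∧ η x = 1) ∧ ∏ x, η x = 1 ∧
        (η b = 1 ∨ η b = -1 ∧ σ b = b) := by
  have hoff : ∀ x : Fin m, x ≠ a ∧ x ≠ b ↔ (x : ℕ) + 2 < m := fun x => by
    simp only [ne_eq, Fin.ext_iff, ha, hb]; omega
  obtain rfl : b = ⟨m - 1, Nat.sub_one_lt_of_lt hmn⟩ := Fin.ext hb
  constructor
  · rintro ⟨hprod, hρ, hS, hlast⟩
    refine ⟨fun x hxa hxb => ?_, hprod, ?_⟩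
    · refine apply_eq_self_and_eq_one_of_dAct_dRho hmn hρ (fun i hi => ?_) x ((hoff x).1 ⟨hxa, hxb⟩)
      obtain ⟨hη, hσ⟩ :=
        eq_one_and_le_of_smul_single_sub_single_mem_dOddPos hi (hS ⟨i, by omega⟩ hi)
      exact ⟨hη, hσ⟩
    · rcases eq_one_or_of_smul_single_add_single_mem_dOddPos _ hlast with h | ⟨h, hσ⟩
      exacts [.inl h, .inr ⟨h, Fin.ext hσ⟩]
  · rintro ⟨hout, hprod, hlast⟩
    have hlow : ∀ i : Fin m, (i : ℕ) + 2 < m → σ i = i ∧ η i = 1 := fun i hi =>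
      hout i ((hoff i).2 hi).1 ((hoff i).2 hi).2
    refine ⟨hprod, dAct_dRho_eq_self hmn hlow, fun i hi => ?_, ?_⟩
    · obtain ⟨hσ, hη⟩ := hlow (Fin.castLE hmn.le i) (by simp only [Fin.val_castLE]; omega)
      dsimp only
      rw [hσ, hη]
      exact .inr (.inl ⟨Fin.castLE hmn.le i, i, hi, le_rfl, by simp⟩)
    · dsimp only
      rcases hlast with hηb | ⟨hηb, hσb⟩
      · exact .inl ⟨_, _, by rw [hηb, Units.val_one, Int.cast_one, one_smul]⟩
      · refine .inr (.inr (.inr (.inr ⟨by omega, by omega, ?_⟩)))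
        rw [hηb, hσb]
        simp only [Units.val_neg, Units.val_one, Int.cast_neg, Int.cast_one, neg_smul, one_smul]
        abel

/-- Step (ii) for `D(m,n)`, `m > n`, second equivalence class: the set
`A = {w ∈ W^# : wρ = ρ, wS ⊆ Δ₊}` consists of exactly the identity,
`s_{ε_{m−1}−ε_m}`, and `s_{ε_{m−1}−ε_m}s_{ε_{m−1}+ε_m}`; consequently
`Σ_{w∈A} sgn(w) = 1`. -/
theorem D_step_ii (m n : ℕ) (hn : 1 ≤ n) (hmn : n < m)
    (A : Set (Equiv.Perm (Fin m) × (Fin m → ℤˣ)))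
    (hA : A = {w | (∏ i, w.2 i = 1) ∧
      dAct m n w.1 w.2 (dRho m n) = dRho m n ∧
      (∀ i : Fin n, (i : ℕ) + 1 < n →
        (((w.2 (Fin.castLE hmn.le i) : ℤ) : ℝ) •
            (Pi.single (Sum.inl (w.1 (Fin.castLE hmn.le i))) 1 :
              Fin m ⊕ Fin n → ℝ) -
          Pi.single (Sum.inr i) 1) ∈ dOddPos m n) ∧
      (((w.2 ⟨m - 1, by omega⟩ : ℤ) : ℝ) •
          (Pi.single (Sum.inl (w.1 ⟨m - 1, by omega⟩)) 1 :
            Fin m ⊕ Fin n → ℝ) +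
        Pi.single (Sum.inr ⟨n - 1, by omega⟩) 1) ∈ dOddPos m n}) :
    A = ({((1 : Equiv.Perm (Fin m)), (fun _ => 1 : Fin m → ℤˣ)),
          ((Equiv.swap ⟨m - 2, by omega⟩ ⟨m - 1, by omega⟩ :
              Equiv.Perm (Fin m)), (fun _ => 1 : Fin m → ℤˣ)),
          ((1 : Equiv.Perm (Fin m)),
            (fun i => if (i : ℕ) = m - 2 ∨ (i : ℕ) = m - 1 then -1 else 1 :
              Fin m → ℤˣ))} :
        Set (Equiv.Perm (Fin m) × (Fin m → ℤˣ))) ∧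
    (∑ w ∈ Finset.univ.filter (fun w : Equiv.Perm (Fin m) × (Fin m → ℤˣ) =>
        w ∈ A), (Equiv.Perm.sign w.1 : ℤ)) = 1 := by
  obtain rfl : A = dAdmissible m n hn hmn := hA
  set a : Fin m := ⟨m - 2, by omega⟩
  set b : Fin m := ⟨m - 1, by omega⟩
  have hab : a ≠ b := by simp only [a, b, ne_eq, Fin.ext_iff]; omega
  have hflip : (fun i : Fin m => if (i : ℕ) = m - 2 ∨ (i : ℕ) = m - 1 then (-1 : ℤˣ) else 1) =
      fun i => if i = a ∨ i = b then -1 else 1 := by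
    simp only [a, b, Fin.ext_iff]
  have hAset : dAdmissible m n hn hmn =
      {(1, fun _ => 1), (swap a b, fun _ => 1), (1, fun i => if i = a ∨ i = b then -1 else 1)} := by
    ext ⟨σ, η⟩
    rw [mem_dAdmissible_iff hn hmn (a := a) (b := b) rfl rfl, signedPerm_trivial_off_pair_iff hab]
    simp only [Set.mem_insert_iff, Set.mem_singleton_iff]
  rw [hflip]
  refine ⟨hAset, ?_⟩
  convert sum_sign_signedPerm_triple hab using 2
  ext w
  simp [hAset]
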